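/- Let n ≥ 1 and let S ⊆ {1,…,n} be a nonempty proper subset with |S| = k. Let a_1 < a_2 < … < a_k be the elements of S and b_1 < b_2 < … < b_{n−k} the elements of {1,…,n} \ S. Define f_S : ℝ^n → ℝ^k × ℝ^{n−k} by f_S(x_1,…,x_n) = ((x_{a_1},…,x_{a_k}), (x_{b_1} − k, …, x_{b_{n−k}} − k)). Then f_S maps the facet F_S of Π_{n−1} bijectively onto the product Π_{k−1} × Π_{n−k−1} of lower-dimensional permutohedra; that is, the image f_S(F_S) equals {(y,z) ∈ ℝ^k × ℝ^{n−k} : y ∈ Π_{k−1} and z ∈ Π_{n−k−1}}. -/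

import Mathlib

/-- The vertex `v_σ` of the permutohedron: its `i`-th coordinate is `σ⁻¹(i)`
(with values in `{1, …, m}`). -/
noncomputable def permuVertex (m : ℕ) (σ : Equiv.Perm (Fin m)) : Fin m → ℝ :=
  fun i => ((σ⁻¹ i : ℕ) : ℝ) + 1

/-- The `(m-1)`-dimensional permutohedron `Π_{m-1} ⊆ ℝ^m`: the convex hull
of the `m!` points `v_σ`. -/
noncomputable def permutohedron (m : ℕ) : Set (Fin m → ℝ) :=
  convexHull ℝ (Set.range (permuVertex m))

/-- The facet `F_S` of the permutohedron, for a nonempty proper `S ⊆ {1, …, n}` with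
`|S| = k`: the points of the permutohedron where `∑_{i ∈ S} x_i = k(k+1)/2`. -/
noncomputable def facet (n : ℕ) (S : Finset (Fin n)) : Set (Fin n → ℝ) :=
  {x ∈ permutohedron n |
    ∑ i ∈ S, x i = ((S.card : ℝ) * ((S.card : ℝ) + 1)) / 2}

/-!
Every vertex satisfies `∑_{i ∈ S} v_σ i ≥ k(k+1)/2`, so the facet is the convex hull of the
vertices on it. Equality at `v_σ` forces `σ⁻¹` to send `S` onto `{1, …, k}` and `Sᶜ` onto
`{k+1, …, n}`; these are exactly the block permutations `facetPerm τ ρ`, with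
`f_S (v_σ) = (v_τ, v_ρ)`. As `f_S` is an injective affine map, it carries the convex hull of these
vertices onto the convex hull of `range v × range v`, which is `Π_{k-1} × Π_{n-k-1}`.
-/

open Finset

/-- Exchange argument: the elements of `T \ range k` are `≥ k`, those of `range k \ T` are `< k`,
and there are equally many of each. -/
theorem sum_range_lt_sum_of_not_subset {M : Type*} [AddCommMonoid M] [LinearOrder M]
    [IsOrderedCancelAddMonoid M] {g : ℕ → M} (hg : StrictMono g) {T : Finset ℕ} {k : ℕ}
    (hT : #T = k) (hTk : ¬T ⊆ range k) :
    ∑ i ∈ range k, g i < ∑ i ∈ T, g i := by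
  have hcard : #(T \ range k) = #(range k \ T) := card_sdiff_comm (by simp [hT])
  have hne : (range k \ T).Nonempty := by
    rw [← card_pos, ← hcard, card_pos, sdiff_nonempty]
    exact hTk
  have hlow : ∑ i ∈ range k \ T, g i < ∑ i ∈ T \ range k, g i :=
    calc ∑ i ∈ range k \ T, g i
        < ∑ _i ∈ range k \ T, g k :=
          sum_lt_sum_of_nonempty hne fun i hi => hg (mem_range.1 (mem_sdiff.1 hi).1)
      _ = ∑ _i ∈ T \ range k, g k := by rw [sum_const, sum_const, hcard]
      _ ≤ ∑ i ∈ T \ range k, g i :=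
          sum_le_sum fun i hi => hg.monotone (not_lt.1 (mt mem_range.2 (mem_sdiff.1 hi).2))
  rw [← sum_inter_add_sum_sdiff (range k) T, ← sum_inter_add_sum_sdiff T (range k), inter_comm]
  exact add_lt_add_right hlow _

theorem sum_range_le_sum_of_card_eq {M : Type*} [AddCommMonoid M] [LinearOrder M]
    [IsOrderedCancelAddMonoid M] {g : ℕ → M} (hg : StrictMono g) {T : Finset ℕ} {k : ℕ}
    (hT : #T = k) :
    ∑ i ∈ range k, g i ≤ ∑ i ∈ T, g i := by
  by_cases hTk : T ⊆ range k
  · rw [eq_of_subset_of_card_le hTk (by simp [hT])]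
  · exact (sum_range_lt_sum_of_not_subset hg hT hTk).le

theorem sum_range_cast_add_one {K : Type*} [Field K] [CharZero K] (m : ℕ) :
    ∑ i ∈ range m, ((i : K) + 1) = m * (m + 1) / 2 := by
  induction m with
  | zero => simp
  | succ m ih => rw [sum_range_succ, ih]; push_cast; ring

theorem sep_convexHull_eq_convexHull_sep {𝕜 E : Type*} [Field 𝕜] [LinearOrder 𝕜]
    [IsStrictOrderedRing 𝕜] [AddCommGroup E] [Module 𝕜 E] {t : Set E} {ℓ : E →ₗ[𝕜] 𝕜} {c : 𝕜}
    (h : ∀ y ∈ t, c ≤ ℓ y) :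
    {x ∈ convexHull 𝕜 t | ℓ x = c} = convexHull 𝕜 {y ∈ t | ℓ y = c} := by
  classical
  refine subset_antisymm ?_ <| convexHull_min (fun y hy => ⟨subset_convexHull 𝕜 t hy.1, hy.2⟩)
    ((convex_convexHull 𝕜 t).inter (convex_hyperplane ℓ.isLinear c))
  rintro x ⟨hx, hxc⟩
  obtain ⟨ι, s, w, z, hw₀, hw₁, hz, hcm⟩ := (_root_.convexHull_eq t).subset hx
  have hsum : ∑ i ∈ s, w i * (ℓ (z i) - c) = 0 := by
    simp only [← hxc, mul_sub, sum_sub_distrib, ← sum_mul, hw₁, one_mul, sub_eq_zero, ← hcm,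
      centerMass_eq_of_sum_1 _ _ hw₁, map_sum, map_smul, smul_eq_mul]
  have hface : ∀ i ∈ s, w i ≠ 0 → ℓ (z i) = c := by
    intro i hi hwi
    have hnonneg : ∀ j ∈ s, 0 ≤ w j * (ℓ (z j) - c) := fun j hj =>
      mul_nonneg (hw₀ j hj) (sub_nonneg.2 (h _ (hz j hj)))
    have := (sum_eq_zero_iff_of_nonneg hnonneg).1 hsum i hi
    exact sub_eq_zero.1 ((mul_eq_zero.1 this).resolve_left hwi)
  rw [← hcm, ← centerMass_filter_ne_zero]
  refine centerMass_mem_convexHull _ (fun i hi => hw₀ i (mem_filter.1 hi).1)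
    (by rw [sum_filter_ne_zero, hw₁]; exact one_pos) fun i hi => ?_
  obtain ⟨his, hwi⟩ := mem_filter.1 hi
  exact ⟨hz i his, hface i his hwi⟩

theorem Finset.sum_eq_sum_orderEmbOfFin {α M : Type*} [LinearOrder α] [AddCommMonoid M]
    (s : Finset α) {k : ℕ} (h : #s = k) (f : α → M) :
    ∑ i ∈ s, f i = ∑ j, f (s.orderEmbOfFin h j) := by
  conv_lhs => rw [← s.map_orderEmbOfFin_univ h, sum_map]
  rfl

theorem le_of_finset_card_eq {n k : ℕ} {S : Finset (Fin n)} (hk : #S = k) : k ≤ n :=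
  hk ▸ card_le_univ S |>.trans_eq (Fintype.card_fin n)

theorem sum_permuVertex (m : ℕ) (σ : Equiv.Perm (Fin m)) :
    ∑ i, permuVertex m σ i = m * (m + 1) / 2 := by
  rw [← sum_range_cast_add_one, ← Fin.sum_univ_eq_sum_range (fun i => (i : ℝ) + 1)]
  exact Equiv.sum_comp σ⁻¹ (fun i : Fin m => ((i : ℕ) : ℝ) + 1)

theorem sum_permuVertex_eq_sum_image {n : ℕ} (S : Finset (Fin n)) (σ : Equiv.Perm (Fin n)) :
    ∑ i ∈ S, permuVertex n σ i = ∑ t ∈ S.image (fun i => ((σ⁻¹ i : Fin n) : ℕ)), ((t : ℝ) + 1) :=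
  (sum_image (f := fun t : ℕ => (t : ℝ) + 1) fun _ _ _ _ h => σ⁻¹.injective (Fin.ext h)).symm

theorem card_image_perm_inv_val {n : ℕ} (S : Finset (Fin n)) (σ : Equiv.Perm (Fin n)) :
    #(S.image fun i => ((σ⁻¹ i : Fin n) : ℕ)) = #S :=
  card_image_of_injective _ fun _ _ h => σ⁻¹.injective (Fin.ext h)

theorem card_mul_card_add_one_div_two_le_sum_permuVertex {n : ℕ} (S : Finset (Fin n))
    (σ : Equiv.Perm (Fin n)) :
    (#S : ℝ) * (#S + 1) / 2 ≤ ∑ i ∈ S, permuVertex n σ i := by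
  rw [← sum_range_cast_add_one, sum_permuVertex_eq_sum_image]
  exact sum_range_le_sum_of_card_eq (Nat.strictMono_cast.add_const 1) (card_image_perm_inv_val S σ)

theorem perm_inv_lt_card_of_sum_permuVertex_eq {n : ℕ} {S : Finset (Fin n)}
    {σ : Equiv.Perm (Fin n)} (h : ∑ i ∈ S, permuVertex n σ i = (#S : ℝ) * (#S + 1) / 2) :
    ∀ i ∈ S, ((σ⁻¹ i : Fin n) : ℕ) < #S := by
  rw [← sum_range_cast_add_one, sum_permuVertex_eq_sum_image] at h
  by_contra! hS
  refine (sum_range_lt_sum_of_not_subset (Nat.strictMono_cast.add_const 1)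
    (card_image_perm_inv_val S σ) ?_).ne' h
  obtain ⟨i, hi, hle⟩ := hS
  exact fun hsub => (mem_range.1 (hsub (mem_image_of_mem _ hi))).not_ge hle

theorem facet_eq_convexHull {n : ℕ} (S : Finset (Fin n)) :
    facet n S = convexHull ℝ
      {y ∈ Set.range (permuVertex n) | ∑ i ∈ S, y i = (#S : ℝ) * (#S + 1) / 2} := by
  let ℓ : (Fin n → ℝ) →ₗ[ℝ] ℝ := ∑ i ∈ S, LinearMap.proj i
  have hℓ : ∀ y, ℓ y = ∑ i ∈ S, y i := fun y => by simp [ℓ]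
  simp only [facet, permutohedron, ← hℓ]
  refine sep_convexHull_eq_convexHull_sep ?_
  rintro _ ⟨σ, rfl⟩
  rw [hℓ]
  exact card_mul_card_add_one_div_two_le_sum_permuVertex S σ

section FacetProduct

variable {n k : ℕ} {S : Finset (Fin n)} (hk : #S = k) (hkc : #Sᶜ = n - k)

def finSumFinSubEquiv (h : k ≤ n) : Fin k ⊕ Fin (n - k) ≃ Fin n :=
  finSumFinEquiv.trans (finCongr (Nat.add_sub_cancel' h))

@[simp]
theorem finSumFinSubEquiv_inl (h : k ≤ n) (j : Fin k) :
    ((finSumFinSubEquiv h (Sum.inl j) : Fin n) : ℕ) = j := by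
  simp [finSumFinSubEquiv]

@[simp]
theorem finSumFinSubEquiv_inr (h : k ≤ n) (j : Fin (n - k)) :
    ((finSumFinSubEquiv h (Sum.inr j) : Fin n) : ℕ) = k + j := by
  simp [finSumFinSubEquiv]

def facetPerm (τ : Equiv.Perm (Fin k)) (ρ : Equiv.Perm (Fin (n - k))) : Equiv.Perm (Fin n) :=
  ((finSumFinSubEquiv (le_of_finset_card_eq hk)).symm.trans (Equiv.sumCongr τ ρ)).trans
    (finSumEquivOfFinset hk hkc)

theorem facetPerm_inv_apply (τ ρ) (x : Fin k ⊕ Fin (n - k)) :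
    (facetPerm hk hkc τ ρ)⁻¹ (finSumEquivOfFinset hk hkc x) =
      finSumFinSubEquiv (le_of_finset_card_eq hk) (Equiv.sumCongr τ⁻¹ ρ⁻¹ x) := by
  simp [facetPerm, Equiv.Perm.inv_def]

theorem exists_eq_facetPerm {σ : Equiv.Perm (Fin n)} (hσ : ∀ i ∈ S, ((σ⁻¹ i : Fin n) : ℕ) < k) :
    ∃ τ ρ, σ = facetPerm hk hkc τ ρ := by
  set e := finSumEquivOfFinset hk hkc
  set b := finSumFinSubEquiv (le_of_finset_card_eq hk)
  let π : Equiv.Perm (Fin k ⊕ Fin (n - k)) := (e.trans σ⁻¹).trans b.symm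
  have hπ : Set.MapsTo π (Set.range Sum.inl) (Set.range Sum.inl) := by
    rintro _ ⟨j, rfl⟩
    refine ⟨⟨_, hσ _ (S.orderEmbOfFin_mem hk j)⟩, (b.symm_apply_eq.2 (Fin.ext ?_)).symm⟩
    simp [e, b]
  obtain ⟨⟨α, β⟩, hαβ⟩ := Equiv.Perm.mem_sumCongrHom_range_of_perm_mapsTo_inl hπ
  refine ⟨α⁻¹, β⁻¹, inv_injective (Equiv.ext fun i => ?_)⟩
  obtain ⟨x, rfl⟩ := e.surjective i
  rw [facetPerm_inv_apply, inv_inv, inv_inv]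
  exact b.symm_apply_eq.1 (DFunLike.congr_fun hαβ x).symm

def facetMap : (Fin n → ℝ) →ᵃ[ℝ] (Fin k → ℝ) × (Fin (n - k) → ℝ) :=
  ((LinearMap.funLeft ℝ ℝ (S.orderEmbOfFin hk)).prod
      (LinearMap.funLeft ℝ ℝ (Sᶜ.orderEmbOfFin hkc))).toAffineMap +
    AffineMap.const ℝ _ (0, fun _ => -(k : ℝ))

theorem facetMap_apply (x : Fin n → ℝ) :
    facetMap hk hkc x =
      (fun j => x (S.orderEmbOfFin hk j), fun j => x (Sᶜ.orderEmbOfFin hkc j) - k) := by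
  ext j <;> simp [facetMap, LinearMap.funLeft, sub_eq_add_neg]

theorem facetMap_injective : Function.Injective (facetMap hk hkc) := by
  intro x y hxy
  simp only [facetMap_apply, Prod.mk.injEq, funext_iff, sub_left_inj] at hxy
  refine funext <| (finSumEquivOfFinset hk hkc).surjective.forall.2 ?_
  rintro (j | j)
  · exact hxy.1 j
  · exact hxy.2 j

theorem permuVertex_facetPerm_orderEmbOfFin (τ ρ) (j : Fin k) :
    permuVertex n (facetPerm hk hkc τ ρ) (S.orderEmbOfFin hk j) = permuVertex k τ j := by
  rw [permuVertex, ← finSumEquivOfFinset_inl hk hkc, facetPerm_inv_apply]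
  simp [permuVertex]

theorem permuVertex_facetPerm_orderEmbOfFin_compl (τ ρ) (j : Fin (n - k)) :
    permuVertex n (facetPerm hk hkc τ ρ) (Sᶜ.orderEmbOfFin hkc j) =
      permuVertex (n - k) ρ j + k := by
  rw [permuVertex, ← finSumEquivOfFinset_inr hk hkc, facetPerm_inv_apply]
  simp only [Equiv.sumCongr_apply, Equiv.Perm.coe_inv, Sum.map_inr, finSumFinSubEquiv_inr,
    Nat.cast_add, permuVertex]
  ring

theorem facetMap_permuVertex_facetPerm (τ ρ) :
    facetMap hk hkc (permuVertex n (facetPerm hk hkc τ ρ)) =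
      (permuVertex k τ, permuVertex (n - k) ρ) := by
  simp [facetMap_apply, permuVertex_facetPerm_orderEmbOfFin,
    permuVertex_facetPerm_orderEmbOfFin_compl]

theorem sum_permuVertex_facetPerm (τ ρ) :
    ∑ i ∈ S, permuVertex n (facetPerm hk hkc τ ρ) i = (k : ℝ) * (k + 1) / 2 := by
  simp only [S.sum_eq_sum_orderEmbOfFin hk, permuVertex_facetPerm_orderEmbOfFin, sum_permuVertex]

theorem image_facetMap_facetVertices :
    facetMap hk hkc '' {y ∈ Set.range (permuVertex n) | ∑ i ∈ S, y i = (k : ℝ) * (k + 1) / 2} =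
      Set.range (permuVertex k) ×ˢ Set.range (permuVertex (n - k)) := by
  ext ⟨y, z⟩
  constructor
  · rintro ⟨_, ⟨⟨σ, rfl⟩, hσ⟩, hyz⟩
    subst hk
    obtain ⟨τ, ρ, rfl⟩ := exists_eq_facetPerm rfl hkc (perm_inv_lt_card_of_sum_permuVertex_eq hσ)
    rw [← hyz, facetMap_permuVertex_facetPerm]
    exact ⟨⟨τ, rfl⟩, ρ, rfl⟩
  · rintro ⟨⟨τ, rfl⟩, ⟨ρ, rfl⟩⟩
    exact ⟨_, ⟨⟨facetPerm hk hkc τ ρ, rfl⟩, sum_permuVertex_facetPerm hk hkc τ ρ⟩,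
      facetMap_permuVertex_facetPerm hk hkc τ ρ⟩

end FacetProduct

theorem statement7_general (n : ℕ) (S : Finset (Fin n))
    (k : ℕ) (hk : S.card = k) (hkc : Sᶜ.card = n - k)
    (f : (Fin n → ℝ) → (Fin k → ℝ) × (Fin (n - k) → ℝ))
    (hf : ∀ x, f x = (fun j => x (S.orderEmbOfFin hk j),
                      fun j => x (Sᶜ.orderEmbOfFin hkc j) - (k : ℝ))) :
    Set.InjOn f (facet n S) ∧
    f '' facet n S =
      {p : (Fin k → ℝ) × (Fin (n - k) → ℝ) |
        p.1 ∈ permutohedron k ∧ p.2 ∈ permutohedron (n - k)} := by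
  obtain rfl : f = facetMap hk hkc := funext fun x => (hf x).trans (facetMap_apply hk hkc x).symm
  refine ⟨(facetMap_injective hk hkc).injOn, ?_⟩
  rw [facet_eq_convexHull, hk, AffineMap.image_convexHull, image_facetMap_facetVertices,
    convexHull_prod]
  rfl

/-- The map `f_S(x) = ((x_{a_1}, …, x_{a_k}), (x_{b_1} - k, …, x_{b_{n-k}} - k))`,
where `a_1 < … < a_k` enumerates `S` and `b_1 < … < b_{n-k}` enumerates the
complement of `S`, maps the facet `F_S` bijectively onto `Π_{k-1} × Π_{n-k-1}`. -/
theorem statement7 (n : ℕ) (hn : 1 ≤ n) (S : Finset (Fin n))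
    (hS : S.Nonempty) (hS' : S ≠ Finset.univ)
    (k : ℕ) (hk : S.card = k) (hkc : Sᶜ.card = n - k)
    (f : (Fin n → ℝ) → (Fin k → ℝ) × (Fin (n - k) → ℝ))
    (hf : ∀ x, f x = (fun j => x (S.orderEmbOfFin hk j),
                      fun j => x (Sᶜ.orderEmbOfFin hkc j) - (k : ℝ))) :
    Set.InjOn f (facet n S) ∧
    f '' facet n S =
      {p : (Fin k → ℝ) × (Fin (n - k) → ℝ) |
        p.1 ∈ permutohedron k ∧ p.2 ∈ permutohedron (n - k)} :=
  statement7_general n S k hk hkc f hf
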